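/- arXiv:2311.07404 — 3 statements merged into one kernel-verified Lean document; each statement's English description precedes it below -/
import Mathlib

section
/- Let S and M be positive semidefinite symmetric real n×n matrices. Then the matrix I + S·M is invertible, and the matrix X = (I + S·M)⁻¹·S satisfies max_{i,j} |X_{ij}| ≤ max_{i,j} |S_{ij}|. -/
/-!
Writing `S = Bᴴ B`, Sylvester's identity gives `det (1 + S M) = det (1 + B M Bᴴ) > 0`, so
`1 + S M` (and likewise `1 + M S`) is invertible. The matrix `X = (1 + S M)⁻¹ S` then lies between
`0` and `S` in the Loewner order: with `Z = (1 + M S)⁻¹` one has `X = Zᴴ (S + S M S) Z` and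
`S - X = Xᴴ M X + (M X)ᴴ S (M X)`. Hence `2 |X i j| ≤ X i i + X j j ≤ S i i + S j j`.
-/

open Matrix

namespace Matrix

variable {n : Type*} [Fintype n] [DecidableEq n]

section RCLike

open scoped ComplexOrder MatrixOrder

variable {𝕜 : Type*} [RCLike 𝕜] {S M : Matrix n n 𝕜}

theorem isUnit_one_add_mul_of_posSemidef (hS : S.PosSemidef) (hM : M.PosSemidef) :
    IsUnit (1 + S * M) := by
  obtain ⟨B, rfl⟩ := CStarAlgebra.nonneg_iff_eq_star_mul_self.mp hS.nonneg
  have hpos : (1 + B * M * Bᴴ).PosDef :=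
    PosDef.one.add_posSemidef (hM.mul_mul_conjTranspose_same B)
  rw [isUnit_iff_isUnit_det, star_eq_conjTranspose, Matrix.mul_assoc, det_one_add_mul_comm]
  exact hpos.det_pos.ne'.isUnit

theorem posSemidef_one_add_mul_inv_mul (hS : S.PosSemidef) (hM : M.PosSemidef) :
    ((1 + S * M)⁻¹ * S).PosSemidef := by
  set Z := (1 + M * S)⁻¹
  have hZ : (1 + M * S) * Z = 1 :=
    mul_nonsing_inv _ ((isUnit_iff_isUnit_det _).mp (isUnit_one_add_mul_of_posSemidef hM hS))
  have hZstar : Zᴴ = (1 + S * M)⁻¹ := by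
    rw [conjTranspose_nonsing_inv, conjTranspose_add, conjTranspose_mul, hM.isHermitian.eq,
      hS.isHermitian.eq, conjTranspose_one]
  have hX : (1 + S * M)⁻¹ * S = Zᴴ * (S + Sᴴ * M * S) * Z := by
    rw [hS.isHermitian.eq, ← hZstar]
    calc Zᴴ * S = Zᴴ * S * ((1 + M * S) * Z) := by rw [hZ, Matrix.mul_one]
      _ = _ := by noncomm_ring
  rw [hX]
  exact (hS.add (hM.conjTranspose_mul_mul_same S)).conjTranspose_mul_mul_same Z

theorem posSemidef_sub_one_add_mul_inv_mul (hS : S.PosSemidef) (hM : M.PosSemidef) :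
    (S - (1 + S * M)⁻¹ * S).PosSemidef := by
  set X := (1 + S * M)⁻¹ * S
  have hSX : (1 + S * M) * X = S :=
    mul_nonsing_inv_cancel_left _ _
      ((isUnit_iff_isUnit_det _).mp (isUnit_one_add_mul_of_posSemidef hS hM))
  have hXS : Xᴴ * (1 + M * S) = S := by
    simpa [conjTranspose_mul, hS.isHermitian.eq, hM.isHermitian.eq] using congrArg conjTranspose hSX
  have hdiff : S - X = Xᴴ * M * X + (M * X)ᴴ * S * (M * X) := by
    calc S - X = (1 + S * M) * X - X := by rw [hSX]
      _ = S * M * X := by noncomm_ring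
      _ = Xᴴ * (1 + M * S) * M * X := by rw [hXS]
      _ = _ := by rw [conjTranspose_mul M X, hM.isHermitian.eq]; noncomm_ring
  rw [hdiff]
  exact (hM.conjTranspose_mul_mul_same X).add (hS.conjTranspose_mul_mul_same (M * X))

end RCLike

theorem PosSemidef.two_mul_abs_apply_le {R : Type*} [CommRing R] [LinearOrder R]
    [IsStrictOrderedRing R] [StarRing R] [TrivialStar R] {A : Matrix n n R} (hA : A.PosSemidef)
    (i j : n) : 2 * |A i j| ≤ A i i + A j j := by
  have hsymm : A j i = A i j := by simpa using hA.isHermitian.apply i j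
  have hquad (c : R) : 0 ≤ A i i + c * (A i j + A j i) + c * c * A j j := by
    have := hA.dotProduct_mulVec_nonneg (Pi.single i 1 + c • Pi.single j 1)
    simp only [star_trivial, mulVec_add, mulVec_smul, dotProduct_add, add_dotProduct,
      smul_dotProduct, dotProduct_smul, mulVec_single, single_dotProduct, smul_eq_mul,
      one_mul, col_apply, op_smul_eq_mul] at this
    linear_combination this
  have hplus := hquad 1
  have hminus := hquad (-1)
  rw [hsymm] at hplus hminus
  cases abs_cases (A i j) <;> linarith

end Matrix

theorem stmt0 {n : ℕ} (S M : Matrix (Fin n) (Fin n) ℝ)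
    (hS : S.PosSemidef) (hM : M.PosSemidef) :
    IsUnit (1 + S * M) ∧
      ∀ i j, |((1 + S * M)⁻¹ * S) i j| ≤ ⨆ p : (Fin n) × (Fin n), |S p.1 p.2| := by
  refine ⟨isUnit_one_add_mul_of_posSemidef hS hM, fun i j => ?_⟩
  have hX := posSemidef_one_add_mul_inv_mul hS hM
  have hSX := posSemidef_sub_one_add_mul_inv_mul hS hM
  have hdiag (a : Fin n) : ((1 + S * M)⁻¹ * S) a a ≤ ⨆ p : (Fin n) × (Fin n), |S p.1 p.2| :=
    calc ((1 + S * M)⁻¹ * S) a a ≤ S a a := sub_nonneg.mp hSX.diag_nonneg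
      _ ≤ |S a a| := le_abs_self _
      _ ≤ ⨆ p : (Fin n) × (Fin n), |S p.1 p.2| :=
          le_ciSup (f := fun p : Fin n × Fin n => |S p.1 p.2|) (Set.finite_range _).bddAbove (a, a)
  linarith [hX.two_mul_abs_apply_le i j, hdiag i, hdiag j]
end

section
/- Let λ < λ_d ≤ λᵢ for all i (i.e., λ is strictly below all the nodes λ₁ ≥ ⋯ ≥ λ_d), with the semi-inner product ⟨p,q⟩ = Σᵢ bᵢ² p(λᵢ) q(λᵢ) positive definite on polynomials of degree ≤ n. Let ζₙ be the minimizer of ‖ζ‖² subject to ζ(λ) = 1 over degree ≤ n, and let π_{n+1} be the (n+1)-th monic orthogonal polynomial. Then ζₙ has degree exactly n, its roots are real, simple, and lie in [λ_d, λ₁], and the roots of ζₙ strictly interlace those of π_{n+1}. -/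
/-!
If `π` had a root outside `[λ_d, λ₁]`, fewer than `n + 1` real roots, or a double root, splitting
off a suitable factor would leave a nonzero `w` of degree `≤ n` with `⟨w, s w⟩ = 0` for some `s`
positive at the nodes, forcing `‖w‖ = 0`. The first-order condition for the minimiser `ζ` says
`⟨ζ, p⟩ = p(λ) ‖ζ‖²` for `deg p ≤ n`. Writing `π = (X - γⱼ) qⱼ` and reducing modulo `X - γⱼ`
(Gauss quadrature) gives `ζ(γⱼ) ‖qⱼ‖² = qⱼ(γⱼ) qⱼ(λ) ‖ζ‖²`, whose sign is `(-1)^(n+j)`. So `ζ`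
changes sign between consecutive roots of `π`, which yields its `n` interlacing roots.
-/

/-- The weighted discrete semi-inner product ⟨p, q⟩ = Σᵢ bᵢ² p(λᵢ) q(λᵢ). -/
noncomputable def wip {d : ℕ} (b lam : Fin d → ℝ) (p q : Polynomial ℝ) : ℝ :=
  ∑ i, (b i) ^ 2 * p.eval (lam i) * q.eval (lam i)

open Polynomial Finset

namespace Polynomial

lemma eq_C_leadingCoeff_mul_prod_X_sub_C {R : Type*} [CommRing R] [IsDomain R] {m : ℕ}
    {p : R[X]} (hp : p ≠ 0) (hdeg : p.natDegree = m) {γ : Fin m → R}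
    (hγ : Function.Injective γ) (hroots : ∀ i, p.IsRoot (γ i)) :
    p = C p.leadingCoeff * ∏ i, (X - C (γ i)) := by
  have hle : univ.val.map γ ≤ p.roots := by
    refine (Multiset.le_iff_subset (univ.nodup.map hγ)).2 fun a ha => ?_
    obtain ⟨i, -, rfl⟩ := Multiset.mem_map.1 ha
    exact (mem_roots hp).2 (hroots i)
  have heq : univ.val.map γ = p.roots :=
    Multiset.eq_of_le_of_card_le hle (by simpa [hdeg] using card_roots' p)
  have hcard : p.roots.card = p.natDegree := by simp [← heq, hdeg]
  conv_lhs => rw [← C_leadingCoeff_mul_prod_multiset_X_sub_C hcard, ← heq]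
  simp [prod_eq_multiset_prod, Function.comp_def]

lemma exists_mem_Ioo_eval_eq_zero (p : ℝ[X]) {a b : ℝ} (hab : a ≤ b)
    (h : p.eval a * p.eval b < 0) : ∃ x ∈ Set.Ioo a b, p.eval x = 0 := by
  rcases mul_neg_iff.1 h with ⟨ha, hb⟩ | ⟨ha, hb⟩
  · exact intermediate_value_Ioo' hab p.continuousOn ⟨hb, ha⟩
  · exact intermediate_value_Ioo hab p.continuousOn ⟨ha, hb⟩

lemma Monic.eval_pos_of_forall_not_isRoot {u : ℝ[X]} (hu : u.Monic) (h : ∀ x, ¬ u.IsRoot x)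
    (x : ℝ) : 0 < u.eval x := by
  rcases Nat.eq_zero_or_pos u.natDegree with hd | hd
  · simp [hu.natDegree_eq_zero.1 hd]
  by_contra! hx
  have htop := tendsto_atTop_of_leadingCoeff_nonneg u (natDegree_pos_iff_degree_pos.1 hd)
    (by simp [hu.leadingCoeff])
  obtain ⟨y, hy0, hxy⟩ := ((htop.eventually_ge_atTop 0).and (Filter.eventually_ge_atTop x)).exists
  obtain ⟨z, -, hz⟩ := intermediate_value_Icc hxy u.continuousOn ⟨hx, hy0⟩
  exact h z hz

end Polynomial

lemma neg_one_pow_card_mul_prod_pos {ι : Type*} {s : Finset ι} {f : ι → ℝ}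
    (h : ∀ i ∈ s, f i < 0) : 0 < (-1) ^ #s * ∏ i ∈ s, f i := by
  rw [← prod_neg]
  exact prod_pos fun i hi => neg_pos.2 (h i hi)

lemma StrictAnti.neg_one_pow_mul_prod_erase_sub_pos {n : ℕ} {γ : Fin n → ℝ} (hγ : StrictAnti γ)
    (j : Fin n) : 0 < (-1) ^ (j : ℕ) * ∏ k ∈ univ.erase j, (γ j - γ k) := by
  have hsplit : univ.erase j = Iio j ∪ Ioi j := by ext k; simp [lt_or_lt_iff_ne]
  have hdisj : Disjoint (Iio j) (Ioi j) :=
    disjoint_left.2 fun k hk hk' => (mem_Iio.1 hk).not_gt (mem_Ioi.1 hk')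
  rw [hsplit, prod_union hdisj, ← mul_assoc, ← Fin.card_Iio j]
  exact mul_pos (neg_one_pow_card_mul_prod_pos fun k hk => sub_neg.2 (hγ (mem_Iio.1 hk)))
    (prod_pos fun k hk => sub_pos.2 (hγ (mem_Ioi.1 hk)))

lemma strictAnti_of_forall_mem_Ioo {n : ℕ} {γ : Fin (n + 1) → ℝ} (hγ : Antitone γ) {μ : Fin n → ℝ}
    (hμ : ∀ i, μ i ∈ Set.Ioo (γ i.succ) (γ i.castSucc)) : StrictAnti μ := fun i j hij =>
  ((hμ j).2.trans_le (hγ (Fin.succ_le_castSucc_iff.2 hij))).trans (hμ i).1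

section InnerProduct

variable {d : ℕ} (b lam : Fin d → ℝ)

lemma wip_eq_of_mul_eq {p q p' q' : ℝ[X]} (h : p * q = p' * q') :
    wip b lam p q = wip b lam p' q' := by
  unfold wip
  refine sum_congr rfl fun i _ => ?_
  rw [mul_assoc, ← eval_mul, h, eval_mul, mul_assoc]

lemma wip_comm (p q : ℝ[X]) : wip b lam p q = wip b lam q p :=
  wip_eq_of_mul_eq b lam (mul_comm p q)

lemma wip_sub_right (p q r : ℝ[X]) : wip b lam p (q - r) = wip b lam p q - wip b lam p r := by
  simp only [wip, eval_sub, mul_sub, sum_sub_distrib]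

lemma wip_add_right (p q r : ℝ[X]) : wip b lam p (q + r) = wip b lam p q + wip b lam p r := by
  simp only [wip, eval_add, mul_add, sum_add_distrib]

lemma wip_C_mul_right (c : ℝ) (p q : ℝ[X]) : wip b lam p (C c * q) = c * wip b lam p q := by
  simp only [wip, eval_mul, eval_C, mul_sum]
  exact sum_congr rfl fun i _ => by ring

lemma wip_mul_self_eq_sum (s w : ℝ[X]) :
    wip b lam w (s * w) = ∑ i, s.eval (lam i) * (b i * w.eval (lam i)) ^ 2 := by
  simp only [wip, eval_mul]
  exact sum_congr rfl fun i _ => by ring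

lemma wip_self_eq_sum (p : ℝ[X]) : wip b lam p p = ∑ i, (b i * p.eval (lam i)) ^ 2 := by
  simp only [wip]
  exact sum_congr rfl fun i _ => by ring

lemma wip_self_nonneg (p : ℝ[X]) : 0 ≤ wip b lam p p := by
  rw [wip_self_eq_sum]
  positivity

lemma wip_self_eq_zero_of_wip_mul_self_eq_zero {s w : ℝ[X]} (hs : ∀ i, 0 < s.eval (lam i))
    (h : wip b lam w (s * w) = 0) : wip b lam w w = 0 := by
  rw [wip_mul_self_eq_sum, sum_eq_zero_iff_of_nonneg fun i _ => by have := hs i; positivity] at h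
  rw [wip_self_eq_sum]
  exact sum_eq_zero fun i _ => by simpa [(hs i).ne'] using h i (mem_univ i)

lemma wip_eq_zero_of_forall_wip_self_le {p q : ℝ[X]}
    (h : ∀ t : ℝ, wip b lam p p ≤ wip b lam (p + C t * q) (p + C t * q)) : wip b lam p q = 0 := by
  have hquad : ∀ t : ℝ, 0 ≤ wip b lam q q * (t * t) + 2 * wip b lam p q * t + 0 := fun t => by
    have hexp : wip b lam (p + C t * q) (p + C t * q)
        = wip b lam p p + 2 * t * wip b lam p q + t * t * wip b lam q q := by
      simp only [wip, mul_sum, ← sum_add_distrib]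
      exact sum_congr rfl fun i _ => by simp only [eval_add, eval_mul, eval_C]; ring
    linarith [h t]
  have := discrim_le_zero hquad
  rw [discrim] at this
  nlinarith [sq_nonneg (wip b lam p q)]

end InnerProduct

section OrthogonalPolynomial

variable {d n : ℕ} {b lam : Fin d → ℝ} {π : ℝ[X]}

lemma mem_Icc_of_isRoot_of_orthogonal {lo hi a : ℝ} (hnodes : ∀ i, lam i ∈ Set.Icc lo hi)
    (hpd : ∀ p : ℝ[X], p.natDegree ≤ n → wip b lam p p = 0 → p = 0)
    (hdeg : π.natDegree = n + 1) (horth : ∀ q : ℝ[X], q.natDegree ≤ n → wip b lam q π = 0)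
    (ha : π.IsRoot a) : a ∈ Set.Icc lo hi := by
  set w := π /ₘ (X - C a)
  have hπw : (X - C a) * w = π := mul_divByMonic_eq_iff_isRoot.2 ha
  have hwdeg : w.natDegree = n := by
    rw [natDegree_divByMonic _ (monic_X_sub_C a), hdeg, natDegree_X_sub_C, Nat.add_sub_cancel]
  have hw0 : w ≠ 0 := fun h => by simp [h] at hπw; simp [← hπw] at hdeg
  have hwπ : wip b lam w ((X - C a) * w) = 0 := hπw ▸ horth w hwdeg.le
  by_contra hout
  rcases not_and_or.1 hout with hlo | hhi
  · refine hw0 (hpd w hwdeg.le (wip_self_eq_zero_of_wip_mul_self_eq_zero b lam (s := X - C a)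
      (fun i => ?_) hwπ))
    simpa using (not_le.1 hlo).trans_le (hnodes i).1
  · refine hw0 (hpd w hwdeg.le (wip_self_eq_zero_of_wip_mul_self_eq_zero b lam (s := C a - X)
      (fun i => ?_) ?_))
    · simpa using (hnodes i).2.trans_lt (not_le.1 hhi)
    · rw [show (C a - X) * w = C (-1) * ((X - C a) * w) by rw [C_neg, C_1]; ring,
        wip_C_mul_right, hwπ, mul_zero]

lemma card_roots_of_orthogonal (hpd : ∀ p : ℝ[X], p.natDegree ≤ n → wip b lam p p = 0 → p = 0)
    (hπ : π.Monic) (hdeg : π.natDegree = n + 1)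
    (horth : ∀ q : ℝ[X], q.natDegree ≤ n → wip b lam q π = 0) : π.roots.card = n + 1 := by
  refine le_antisymm (hdeg ▸ card_roots' π) (not_lt.1 fun hlt => ?_)
  set v := (π.roots.map fun a => X - C a).prod
  have hv : v.Monic := monic_multiset_prod_of_monic _ _ fun a _ => monic_X_sub_C a
  obtain ⟨u, hvu⟩ := prod_multiset_X_sub_C_dvd π
  have hu : u.Monic := hv.of_mul_monic_left (hvu ▸ hπ)
  -- all real roots of `π` are already in `v`, so the monic cofactor `u` has none
  have hu_roots : u.roots = 0 := by
    have h := roots_mul (hvu ▸ hπ.ne_zero)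
    rwa [← hvu, roots_multiset_prod_X_sub_C, left_eq_add] at h
  have hu_pos : ∀ x, 0 < u.eval x := hu.eval_pos_of_forall_not_isRoot fun x hx => by
    simpa [hu_roots] using (mem_roots hu.ne_zero).2 hx
  have hvdeg : v.natDegree ≤ n := by
    rw [natDegree_multiset_prod_X_sub_C_eq_card]; omega
  refine hv.ne_zero (hpd v hvdeg (wip_self_eq_zero_of_wip_mul_self_eq_zero b lam
    (fun i => hu_pos (lam i)) ?_))
  rw [mul_comm, ← hvu]
  exact horth v hvdeg

lemma nodup_roots_of_orthogonal (hpd : ∀ p : ℝ[X], p.natDegree ≤ n → wip b lam p p = 0 → p = 0)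
    (hdeg : π.natDegree = n + 1) (horth : ∀ q : ℝ[X], q.natDegree ≤ n → wip b lam q π = 0) :
    π.roots.Nodup := by
  have hπ0 : π ≠ 0 := fun h => by simp [h] at hdeg
  classical
  refine Multiset.nodup_iff_count_le_one.2 fun a => not_lt.1 fun hlt => ?_
  rw [count_roots] at hlt
  obtain ⟨r, hr⟩ := (le_rootMultiplicity_iff hπ0).1 (Nat.succ_le_of_lt hlt)
  set s := (X - C a) * r
  have hπs : π = (X - C a) * s := by rw [hr]; ring
  have hs0 : s ≠ 0 := fun h => hπ0 (by rw [hπs, h, mul_zero])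
  have hsdeg : s.natDegree = n := by
    rw [hπs, natDegree_mul (X_sub_C_ne_zero a) hs0, natDegree_X_sub_C] at hdeg; omega
  have hrdeg : r.natDegree ≤ n := hsdeg ▸ natDegree_le_of_dvd (dvd_mul_left r _) hs0
  refine hs0 (hpd s hsdeg.le ?_)
  rw [← horth r hrdeg]
  exact wip_eq_of_mul_eq b lam (by rw [hπs]; ring)

lemma exists_strictAnti_roots_of_orthogonal
    (hpd : ∀ p : ℝ[X], p.natDegree ≤ n → wip b lam p p = 0 → p = 0)
    (hπ : π.Monic) (hdeg : π.natDegree = n + 1)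
    (horth : ∀ q : ℝ[X], q.natDegree ≤ n → wip b lam q π = 0) :
    ∃ γ : Fin (n + 1) → ℝ, StrictAnti γ ∧ (∀ i, π.IsRoot (γ i)) ∧
      π = ∏ i, (X - C (γ i)) := by
  have hcard : π.roots.toFinset.card = n + 1 := by
    rw [Multiset.toFinset_card_of_nodup (nodup_roots_of_orthogonal hpd hdeg horth),
      card_roots_of_orthogonal hpd hπ hdeg horth]
  set γ : Fin (n + 1) → ℝ := fun i => π.roots.toFinset.orderEmbOfFin hcard i.rev
  have hγ : StrictAnti γ := fun i j hij =>
    (π.roots.toFinset.orderEmbOfFin hcard).strictMono (Fin.rev_lt_rev.2 hij)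
  have hroots : ∀ i, π.IsRoot (γ i) := fun i =>
    (mem_roots hπ.ne_zero).1 (Multiset.mem_toFinset.1 (orderEmbOfFin_mem _ hcard _))
  refine ⟨γ, hγ, hroots, ?_⟩
  simpa [hπ.leadingCoeff] using
    eq_C_leadingCoeff_mul_prod_X_sub_C hπ.ne_zero hdeg hγ.injective hroots

lemma wip_eq_eval_mul_wip_one_of_orthogonal
    (horth : ∀ q : ℝ[X], q.natDegree ≤ n → wip b lam q π = 0) {c : ℝ} {q : ℝ[X]}
    (hπq : π = (X - C c) * q) {f : ℝ[X]} (hf : f.natDegree ≤ n) :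
    wip b lam q f = f.eval c * wip b lam q 1 := by
  set g := f /ₘ (X - C c)
  have hf_eq : f = C (f.eval c) * 1 + (X - C c) * g := by
    rw [mul_one, ← modByMonic_X_sub_C_eq_C_eval, modByMonic_add_div]
  have hg : wip b lam q ((X - C c) * g) = 0 := by
    rw [← horth g (by rw [natDegree_divByMonic _ (monic_X_sub_C c)]; omega)]
    exact wip_eq_of_mul_eq b lam (by rw [hπq]; ring)
  rw [hf_eq, wip_add_right, wip_C_mul_right, hg, add_zero, ← hf_eq]

end OrthogonalPolynomial

section Minimizer

variable {d n : ℕ} {b lam : Fin d → ℝ} {lm : ℝ} {ζ : ℝ[X]}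

lemma wip_eq_eval_mul_of_isMinimizer (hζdeg : ζ.natDegree ≤ n) (hζlm : ζ.eval lm = 1)
    (hmin : ∀ ζ' : ℝ[X], ζ'.natDegree ≤ n → ζ'.eval lm = 1 → wip b lam ζ ζ ≤ wip b lam ζ' ζ')
    {p : ℝ[X]} (hp : p.natDegree ≤ n) : wip b lam ζ p = p.eval lm * wip b lam ζ ζ := by
  set q := p - C (p.eval lm) * ζ
  have hqdeg : q.natDegree ≤ n :=
    natDegree_sub_le_of_le hp ((natDegree_C_mul_le _ _).trans hζdeg) |>.trans_eq (max_self n)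
  have hq : wip b lam ζ q = 0 := wip_eq_zero_of_forall_wip_self_le b lam fun t =>
    hmin _ (natDegree_add_le_of_le hζdeg ((natDegree_C_mul_le _ _).trans hqdeg) |>.trans
      (max_self n).le) (by simp [q, hζlm])
  rw [wip_sub_right, wip_C_mul_right, sub_eq_zero] at hq
  exact hq

lemma natDegree_eq_of_isMinimizer (hlm : ∀ i, lm < lam i)
    (hpd : ∀ p : ℝ[X], p.natDegree ≤ n → wip b lam p p = 0 → p = 0)
    (hζdeg : ζ.natDegree ≤ n) (hζlm : ζ.eval lm = 1)
    (hmin : ∀ ζ' : ℝ[X], ζ'.natDegree ≤ n → ζ'.eval lm = 1 → wip b lam ζ ζ ≤ wip b lam ζ' ζ') :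
    ζ.natDegree = n := by
  have hζ0 : ζ ≠ 0 := fun h => by simp [h] at hζlm
  refine hζdeg.eq_of_not_lt fun hlt => hζ0 (hpd ζ hζdeg ?_)
  have hdeg : ((X - C lm) * ζ).natDegree ≤ n := by
    rw [natDegree_mul (X_sub_C_ne_zero lm) hζ0, natDegree_X_sub_C]; omega
  refine wip_self_eq_zero_of_wip_mul_self_eq_zero b lam (s := X - C lm)
    (fun i => by simpa using hlm i) ?_
  rw [wip_eq_eval_mul_of_isMinimizer hζdeg hζlm hmin hdeg]
  simp

end Minimizer

section Interlacing

variable {d n : ℕ} {b lam : Fin d → ℝ} {lm : ℝ} {ζ π : ℝ[X]}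

lemma eval_mul_wip_self_eq_of_isMinimizer
    (horth : ∀ q : ℝ[X], q.natDegree ≤ n → wip b lam q π = 0)
    (hζdeg : ζ.natDegree ≤ n) (hζlm : ζ.eval lm = 1)
    (hmin : ∀ ζ' : ℝ[X], ζ'.natDegree ≤ n → ζ'.eval lm = 1 → wip b lam ζ ζ ≤ wip b lam ζ' ζ')
    {c : ℝ} {q : ℝ[X]} (hπq : π = (X - C c) * q) (hqdeg : q.natDegree ≤ n) :
    ζ.eval c * wip b lam q q = q.eval c * q.eval lm * wip b lam ζ ζ := by
  have hqζ := wip_eq_eval_mul_wip_one_of_orthogonal horth hπq hζdeg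
  have hqq := wip_eq_eval_mul_wip_one_of_orthogonal horth hπq hqdeg
  have hζq := wip_eq_eval_mul_of_isMinimizer hζdeg hζlm hmin hqdeg
  rw [wip_comm, hqζ] at hζq
  rw [hqq, mul_assoc, ← hζq]
  ring

lemma neg_one_pow_mul_eval_pos_of_isMinimizer {γ : Fin (n + 1) → ℝ} (hγ : StrictAnti γ)
    (hπγ : π = ∏ i, (X - C (γ i))) (hlm : ∀ i, lm < γ i)
    (hpd : ∀ p : ℝ[X], p.natDegree ≤ n → wip b lam p p = 0 → p = 0)
    (horth : ∀ q : ℝ[X], q.natDegree ≤ n → wip b lam q π = 0)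
    (hζdeg : ζ.natDegree ≤ n) (hζlm : ζ.eval lm = 1)
    (hmin : ∀ ζ' : ℝ[X], ζ'.natDegree ≤ n → ζ'.eval lm = 1 → wip b lam ζ ζ ≤ wip b lam ζ' ζ')
    (j : Fin (n + 1)) : 0 < (-1) ^ (n + j : ℕ) * ζ.eval (γ j) := by
  set q := ∏ k ∈ univ.erase j, (X - C (γ k))
  have hπq : π = (X - C (γ j)) * q := by
    rw [hπγ, mul_prod_erase _ (fun k => X - C (γ k)) (mem_univ j)]
  have hqdeg : q.natDegree = n := by simp [q]
  have hq0 : q ≠ 0 := (monic_prod_of_monic _ _ fun k _ => monic_X_sub_C (γ k)).ne_zero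
  have hζ0 : ζ ≠ 0 := fun h => by simp [h] at hζlm
  have hqq : 0 < wip b lam q q :=
    (wip_self_nonneg b lam q).lt_of_ne' fun h => hq0 (hpd q hqdeg.le h)
  have hζζ : 0 < wip b lam ζ ζ :=
    (wip_self_nonneg b lam ζ).lt_of_ne' fun h => hζ0 (hpd ζ hζdeg h)
  have hqγ : 0 < (-1) ^ (j : ℕ) * q.eval (γ j) := by
    simpa [q, eval_prod] using hγ.neg_one_pow_mul_prod_erase_sub_pos j
  have hqlm : 0 < (-1) ^ n * q.eval lm := by
    simpa [q, eval_prod] using neg_one_pow_card_mul_prod_pos (s := univ.erase j)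
      (f := fun k => lm - γ k) fun k _ => sub_neg.2 (hlm k)
  have hkey := eval_mul_wip_self_eq_of_isMinimizer horth hζdeg hζlm hmin hπq hqdeg.le
  refine (pos_iff_pos_of_mul_pos (b := wip b lam q q) ?_).2 hqq
  calc 0 < (-1) ^ (j : ℕ) * q.eval (γ j) * ((-1) ^ n * q.eval lm) * wip b lam ζ ζ := by
        positivity
    _ = (-1) ^ (n + j : ℕ) * ζ.eval (γ j) * wip b lam q q := by
        rw [mul_assoc _ (ζ.eval _), hkey]; ring

lemma exists_eval_eq_zero_mem_Ioo_of_isMinimizer {γ : Fin (n + 1) → ℝ} (hγ : StrictAnti γ)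
    (hπγ : π = ∏ i, (X - C (γ i))) (hlm : ∀ i, lm < γ i)
    (hpd : ∀ p : ℝ[X], p.natDegree ≤ n → wip b lam p p = 0 → p = 0)
    (horth : ∀ q : ℝ[X], q.natDegree ≤ n → wip b lam q π = 0)
    (hζdeg : ζ.natDegree ≤ n) (hζlm : ζ.eval lm = 1)
    (hmin : ∀ ζ' : ℝ[X], ζ'.natDegree ≤ n → ζ'.eval lm = 1 → wip b lam ζ ζ ≤ wip b lam ζ' ζ')
    (i : Fin n) : ∃ x ∈ Set.Ioo (γ i.succ) (γ i.castSucc), ζ.eval x = 0 := by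
  have hsucc := neg_one_pow_mul_eval_pos_of_isMinimizer hγ hπγ hlm hpd horth hζdeg hζlm hmin
    i.succ
  have hcast := neg_one_pow_mul_eval_pos_of_isMinimizer hγ hπγ hlm hpd horth hζdeg hζlm hmin
    i.castSucc
  rw [Fin.val_succ, ← add_assoc, pow_succ] at hsucc
  rw [Fin.val_castSucc] at hcast
  refine ζ.exists_mem_Ioo_eval_eq_zero (hγ Fin.castSucc_lt_succ).le ?_
  rcases neg_one_pow_eq_or ℝ (n + i) with h | h <;> rw [h] at hsucc hcast <;> nlinarith

end Interlacing

theorem stmt10 {d n : ℕ} (b lam : Fin d → ℝ) (lam_d lam_1 lm : ℝ)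
    (hnodes : ∀ i, lam i ∈ Set.Icc lam_d lam_1) (hlm : lm < lam_d)
    (hpd : ∀ p : Polynomial ℝ, p.natDegree ≤ n → wip b lam p p = 0 → p = 0)
    (ζ π : Polynomial ℝ)
    (hζ : ζ.natDegree ≤ n ∧ ζ.eval lm = 1 ∧
      ∀ ζ' : Polynomial ℝ, ζ'.natDegree ≤ n → ζ'.eval lm = 1 →
        wip b lam ζ ζ ≤ wip b lam ζ' ζ')
    (hπ : π.Monic ∧ π.natDegree = n + 1 ∧
      ∀ q : Polynomial ℝ, q.natDegree ≤ n → wip b lam q π = 0) :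
    ζ.natDegree = n ∧
    ∃ γ : Fin (n + 1) → ℝ, ∃ μ : Fin n → ℝ,
      π = ∏ i, (Polynomial.X - Polynomial.C (γ i)) ∧
      ζ = Polynomial.C ζ.leadingCoeff * ∏ i, (Polynomial.X - Polynomial.C (μ i)) ∧
      StrictAnti γ ∧ StrictAnti μ ∧
      (∀ i, μ i ∈ Set.Icc lam_d lam_1) ∧
      ∀ i : Fin n, γ i.succ < μ i ∧ μ i < γ i.castSucc := by
  obtain ⟨hζdeg, hζlm, hmin⟩ := hζ
  obtain ⟨hπmonic, hπdeg, horth⟩ := hπ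
  obtain ⟨γ, hγ, hγroot, hπγ⟩ := exists_strictAnti_roots_of_orthogonal hpd hπmonic hπdeg horth
  have hγIcc i : γ i ∈ Set.Icc lam_d lam_1 :=
    mem_Icc_of_isRoot_of_orthogonal hnodes hpd hπdeg horth (hγroot i)
  have hζdeg_eq : ζ.natDegree = n :=
    natDegree_eq_of_isMinimizer (fun i => hlm.trans_le (hnodes i).1) hpd hζdeg hζlm hmin
  choose μ hμ hμroot using exists_eval_eq_zero_mem_Ioo_of_isMinimizer hγ hπγ
    (fun i => hlm.trans_le (hγIcc i).1) hpd horth hζdeg hζlm hmin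
  have hμ_anti : StrictAnti μ := strictAnti_of_forall_mem_Ioo hγ.antitone hμ
  refine ⟨hζdeg_eq, γ, μ, hπγ, ?_, hγ, hμ_anti, fun i => ?_, hμ⟩
  · exact eq_C_leadingCoeff_mul_prod_X_sub_C (fun h => by simp [h] at hζlm) hζdeg_eq
      hμ_anti.injective hμroot
  · exact ⟨(hγIcc i.succ).1.trans (hμ i).1.le, (hμ i).2.le.trans (hγIcc i.castSucc).2⟩
end

section
/- Let D be a positive definite diagonal real m×m matrix, G a positive semidefinite symmetric m×m matrix, and B a diagonal real m×m matrix. Then the matrix D + B²·D⁻¹·G is invertible. -/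
open scoped ComplexOrder

namespace Matrix

variable {n 𝕜 : Type*} [Fintype n] [DecidableEq n] [RCLike 𝕜]

/-- Sylvester's identity `det (1 + Xᴴ (X G)) = det (1 + X G Xᴴ)` reduces this to the positive
definiteness of `1 + X G Xᴴ`. -/
theorem isUnit_one_add_conjTranspose_mul_mul_of_posSemidef (X : Matrix n n 𝕜)
    {G : Matrix n n 𝕜} (hG : G.PosSemidef) : IsUnit (1 + Xᴴ * X * G) := by
  have hpd : (1 + X * G * Xᴴ).PosDef :=
    PosDef.one.add_posSemidef (hG.mul_mul_conjTranspose_same X)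
  rw [isUnit_iff_isUnit_det, Matrix.mul_assoc, det_one_add_mul_comm]
  exact (isUnit_iff_isUnit_det _).mp hpd.isUnit

theorem isUnit_add_mul_mul_inv_mul_of_posSemidef {D B G : Matrix n n 𝕜}
    (hD : D.IsHermitian) (hDu : IsUnit D) (hB : B.IsHermitian) (hG : G.PosSemidef) :
    IsUnit (D + B * B * (D⁻¹ * G)) := by
  have hfactor : D + B * B * (D⁻¹ * G) = D * (1 + (B * D⁻¹)ᴴ * (B * D⁻¹) * G) := by
    rw [conjTranspose_mul, hB.eq, conjTranspose_nonsing_inv, hD.eq]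
    simp only [Matrix.mul_add, Matrix.mul_one, ← Matrix.mul_assoc,
      mul_nonsing_inv _ ((isUnit_iff_isUnit_det D).mp hDu), Matrix.one_mul]
  rw [hfactor]
  exact hDu.mul (isUnit_one_add_conjTranspose_mul_mul_of_posSemidef _ hG)

end Matrix

theorem stmt14 {m : ℕ} (D B G : Matrix (Fin m) (Fin m) ℝ)
    (hD : D.IsDiag) (hDpos : ∀ i, 0 < D i i) (hB : B.IsDiag) (hG : G.PosSemidef) :
    IsUnit (D + B * B * (D⁻¹ * G)) := by
  have hDu : IsUnit D := by
    rw [← hD.diagonal_diag, Matrix.isUnit_diagonal]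
    exact Pi.isUnit_iff.mpr fun i => (hDpos i).ne'.isUnit
  exact Matrix.isUnit_add_mul_mul_inv_mul_of_posSemidef
    (Matrix.isHermitian_iff_isSymm.mpr hD.isSymm) hDu
    (Matrix.isHermitian_iff_isSymm.mpr hB.isSymm) hG
end
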